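/- Let η: ℝ²×ℝ² → ℂ be a smooth function compactly supported in {(x,y) : 1/2 ≤ ‖x‖ ≤ 1, 1/2 ≤ ‖y‖ ≤ 1}, and for ζ, ξ ∈ ℝ² and τ, t ∈ ℝ define the oscillatory integral I(ζ,ξ,τ) = ∬_{ℝ²×ℝ²} e^{2πi(−ζ·x + ξ·y + τ(x·y^⊥ − t))} η(x,y) dx dy. Then for every N ∈ ℕ there exists a constant C_N, depending only on N and η, such that for all integers j, l ≥ 0 with |j − l| > 5, all ζ with 2^{j−2} ≤ ‖ζ‖ ≤ 2^{j+2}, all ξ with 2^{l−2} ≤ ‖ξ‖ ≤ 2^{l+2}, and all τ, t ∈ ℝ, |I(ζ,ξ,τ)| ≤ C_N 2^{−N max(j,l)}. -/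

import Mathlib

open MeasureTheory Real
open scoped ENNReal

noncomputable section

/-- The plane `ℝ²` with the Euclidean norm. -/
abbrev Plane : Type := EuclideanSpace ℝ (Fin 2)

/-- The signed area `x · y^⊥`, where `y^⊥ = (−y₂, y₁)`. -/
def sarea (x y : Plane) : ℝ := x 0 * (-(y 1)) + x 1 * y 0

/-- The oscillatory integral
`I(ζ,ξ,τ) = ∬ e^{2πi(−ζ·x + ξ·y + τ(x·y^⊥ − t))} η(x,y) dx dy`. -/
def oscInt (η : Plane × Plane → ℂ) (ζ ξ : Plane) (τ t : ℝ) : ℂ :=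
  ∫ x : Plane, ∫ y : Plane,
    Complex.exp (Complex.I * (2 * Real.pi *
      (-(inner ℝ ζ x : ℝ) + (inner ℝ ξ y : ℝ) + τ * (sarea x y - t)))) * η (x, y)

open FourierTransform

/-- An auxiliary rotation: `perp x = (x₂, −x₁)`, so that `⟪perp x, y⟫ = sarea x y`. -/
def perp (x : Plane) : Plane := !₂[x 1, -(x 0)]

lemma inner_perp (x y : Plane) : (inner ℝ (perp x) y : ℝ) = sarea x y := by
  simp [perp, sarea, PiLp.inner_apply, Fin.sum_univ_two]
  ring

lemma norm_perp (x : Plane) : ‖perp x‖ = ‖x‖ := by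
  simp [perp, EuclideanSpace.norm_eq, Fin.sum_univ_two]
  ring_nf

lemma sarea_swap (a b : Plane) : sarea b a = -sarea a b := by
  simp [sarea]; ring

lemma phase_cont (ζ ξ : Plane) (τ t : ℝ) :
    Continuous fun p : Plane × Plane ↦
      2 * π * (-(inner ℝ ζ p.1 : ℝ) + (inner ℝ ξ p.2 : ℝ) + τ * (sarea p.1 p.2 - t)) := by
  have h0 : ∀ i : Fin 2, Continuous fun x : Plane ↦ x i := by
    intro i
    exact (EuclideanSpace.proj i).continuous
  unfold sarea
  have h1 : Continuous fun p : Plane × Plane ↦ (inner ℝ ζ p.1 : ℝ) :=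
    (innerSL ℝ ζ).continuous.comp continuous_fst
  have h2 : Continuous fun p : Plane × Plane ↦ (inner ℝ ξ p.2 : ℝ) :=
    (innerSL ℝ ξ).continuous.comp continuous_snd
  have h3 : ∀ i : Fin 2, Continuous fun p : Plane × Plane ↦ p.1 i :=
    fun i ↦ (h0 i).comp continuous_fst
  have h4 : ∀ i : Fin 2, Continuous fun p : Plane × Plane ↦ p.2 i :=
    fun i ↦ (h0 i).comp continuous_snd
  fun_prop

/-- Decay of the Fourier transform of a smooth function supported in the unit ball. -/
lemma fourier_decay (f : Plane → ℂ) (hf : ContDiff ℝ (⊤ : ℕ∞) f) (hc : HasCompactSupport f)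
    (hsupp : tsupport f ⊆ Metric.closedBall 0 1)
    (N : ℕ) {S : ℝ} (hS : ∀ m : ℕ, m ≤ N → ∀ v, ‖iteratedFDeriv ℝ m f v‖ ≤ S)
    {R : ℝ} (hR : 0 < R) {w : Plane} (hw : R ≤ ‖w‖) :
    ‖𝓕 f w‖ ≤ 2 ^ N * ((N + 1) *
      ((volume (Metric.closedBall (0 : Plane) 1)).toReal * S)) / R ^ N := by
  have hS0 : 0 ≤ S := le_trans (norm_nonneg _) (hS 0 (Nat.zero_le _) 0)
  have h'f : ∀ k n : ℕ, (k : ℕ∞) ≤ (0 : ℕ∞) → (n : ℕ∞) ≤ (N : ℕ∞) →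
      Integrable (fun v : Plane ↦ ‖v‖ ^ k * ‖iteratedFDeriv ℝ n f v‖) := by
    intro k n _ _
    apply Continuous.integrable_of_hasCompactSupport
    · exact (continuous_norm.pow k).mul
        ((hf.continuous_iteratedFDeriv (by exact_mod_cast le_top)).norm)
    · apply HasCompactSupport.mul_left
      exact (hc.iteratedFDeriv n).norm
  have key := Real.pow_mul_norm_iteratedFDeriv_fourier_le (f := f)
    (K := 0) (N := (N : ℕ∞)) (hf.of_le (by exact_mod_cast le_top)) h'f (k := 0) (n := N) le_rfl le_rfl w
  simp only [pow_zero, one_mul, norm_iteratedFDeriv_zero, Nat.mul_zero, zero_add] at key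
  have hvol : volume (Metric.closedBall (0 : Plane) 1) < ⊤ :=
    (isCompact_closedBall _ _).measure_lt_top
  have hint : ∀ m : ℕ, m ≤ N → (∫ v : Plane, ‖v‖ ^ (0:ℕ) * ‖iteratedFDeriv ℝ m f v‖) ≤
      (volume (Metric.closedBall (0 : Plane) 1)).toReal * S := by
    intro m hm
    have hmono : ∀ v : Plane, ‖v‖ ^ (0:ℕ) * ‖iteratedFDeriv ℝ m f v‖ ≤
        Set.indicator (Metric.closedBall (0 : Plane) 1) (fun _ ↦ S) v := by
      intro v
      rw [pow_zero, one_mul]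
      by_cases hv : v ∈ Metric.closedBall (0 : Plane) 1
      · rw [Set.indicator_of_mem hv]; exact hS m hm v
      · rw [Set.indicator_of_notMem hv]
        have hnm : v ∉ tsupport f := fun h => hv (hsupp h)
        have hz : iteratedFDeriv ℝ m f v = 0 := by
          by_contra h'
          exact hnm (tsupport_iteratedFDeriv_subset m (subset_closure (by simpa using h')))
        simp [hz]
    calc (∫ v : Plane, ‖v‖ ^ (0:ℕ) * ‖iteratedFDeriv ℝ m f v‖)
        ≤ ∫ v : Plane, Set.indicator (Metric.closedBall (0 : Plane) 1) (fun _ ↦ S) v := by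
          apply integral_mono (h'f 0 m (by simp) (by exact_mod_cast hm)) _ _
          · exact (integrable_indicator_iff measurableSet_closedBall).2
              (integrableOn_const hvol.ne)
          · intro v; simpa using hmono v
      _ = (volume (Metric.closedBall (0 : Plane) 1)).toReal * S := by
          rw [integral_indicator_const _ measurableSet_closedBall, smul_eq_mul]; rfl
  have hsum : (∑ p ∈ Finset.range 1 ×ˢ Finset.range (N + 1),
      ∫ v : Plane, ‖v‖ ^ p.1 * ‖iteratedFDeriv ℝ p.2 f v‖) ≤
      (N + 1) * ((volume (Metric.closedBall (0 : Plane) 1)).toReal * S) := by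
    have hterm : ∀ p ∈ Finset.range 1 ×ˢ Finset.range (N + 1),
        (∫ v : Plane, ‖v‖ ^ p.1 * ‖iteratedFDeriv ℝ p.2 f v‖) ≤
        (volume (Metric.closedBall (0 : Plane) 1)).toReal * S := by
      rintro ⟨a, b⟩ hp
      simp only [Finset.mem_product, Finset.mem_range, Nat.lt_one_iff,
        Nat.lt_succ_iff] at hp
      obtain rfl : a = 0 := by omega
      exact hint b hp.2
    calc (∑ p ∈ Finset.range 1 ×ˢ Finset.range (N + 1),
        ∫ v : Plane, ‖v‖ ^ p.1 * ‖iteratedFDeriv ℝ p.2 f v‖)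
        ≤ ∑ _p ∈ Finset.range 1 ×ˢ Finset.range (N + 1),
          (volume (Metric.closedBall (0 : Plane) 1)).toReal * S :=
          Finset.sum_le_sum hterm
      _ = (N + 1) * ((volume (Metric.closedBall (0 : Plane) 1)).toReal * S) := by
          simp [Finset.card_product, mul_comm]
  rw [div_eq_mul_inv, mul_comm, ← inv_mul_le_iff₀ (by positivity), inv_inv]
  calc R ^ N * ‖𝓕 f w‖ ≤ ‖w‖ ^ N * ‖𝓕 f w‖ := by
        gcongr
    _ ≤ 2 ^ N * ((N + 1) *
        ((volume (Metric.closedBall (0 : Plane) 1)).toReal * S)) := by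
        have h2 : ((2 * (0:ℕ) + 2:ℝ)) ^ N *
            (∑ p ∈ Finset.range 1 ×ˢ Finset.range (N + 1),
              ∫ v : Plane, ‖v‖ ^ p.1 * ‖iteratedFDeriv ℝ p.2 f v‖) ≤
            2 ^ N * ((N + 1) *
              ((volume (Metric.closedBall (0 : Plane) 1)).toReal * S)) := by
          have h3 : ((2:ℝ) * (0:ℕ) + 2) = 2 := by norm_num
          rw [h3]
          exact mul_le_mul_of_nonneg_left hsum (by positivity)
        exact key.trans h2

/-- Uniform bound on iterated derivatives of a slice `y ↦ η (x, y)`. -/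
lemma slice_bound (η : Plane × Plane → ℂ) (hη : ContDiff ℝ (⊤ : ℕ∞) η) (N : ℕ) {A : ℝ}
    (hA : ∀ i : ℕ, i ≤ N → ∀ p, ‖iteratedFDeriv ℝ i η p‖ ≤ A)
    (x : Plane) {m : ℕ} (hm : m ≤ N) (y : Plane) :
    ‖iteratedFDeriv ℝ m (fun y : Plane ↦ η (x, y)) y‖ ≤ (N.factorial : ℝ) * A := by
  have hA0 : 0 ≤ A := le_trans (norm_nonneg _) (hA 0 (Nat.zero_le _) (x, y))
  set aff : Plane → Plane × Plane :=
    fun z ↦ ((x, (0 : Plane)) : Plane × Plane) + ContinuousLinearMap.inr ℝ Plane Plane z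
    with haff
  have affeq : ∀ z, aff z = (x, z) := by
    intro z; simp [haff, Prod.ext_iff]
  have haffc : ContDiff ℝ (⊤ : ℕ∞) aff :=
    contDiff_const.add (ContinuousLinearMap.inr ℝ Plane Plane).contDiff
  have hfd : fderiv ℝ aff = fun _ ↦ ContinuousLinearMap.inr ℝ Plane Plane := by
    funext z
    have h : HasFDerivAt aff (0 + ContinuousLinearMap.inr ℝ Plane Plane) z :=
      (hasFDerivAt_const _ _).add (ContinuousLinearMap.inr ℝ Plane Plane).hasFDerivAt
    simpa using h.fderiv
  have hinr : ‖ContinuousLinearMap.inr ℝ Plane Plane‖ ≤ 1 := by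
    apply ContinuousLinearMap.opNorm_le_bound _ zero_le_one
    intro z
    simp [Prod.norm_def]
  have hD : ∀ i : ℕ, 1 ≤ i → i ≤ m → ‖iteratedFDeriv ℝ i aff y‖ ≤ 1 ^ i := by
    intro i hi _
    rw [one_pow]
    obtain ⟨k, rfl⟩ : ∃ k, i = k + 1 := ⟨i - 1, by omega⟩
    rw [← norm_iteratedFDeriv_fderiv, hfd]
    cases k with
    | zero => rw [norm_iteratedFDeriv_zero]; exact hinr
    | succ k' => rw [iteratedFDeriv_succ_const]; simp
  have hC : ∀ i : ℕ, i ≤ m → ‖iteratedFDeriv ℝ i η (aff y)‖ ≤ A :=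
    fun i hi ↦ hA i (le_trans hi hm) _
  have hcomp := norm_iteratedFDeriv_comp_le hη haffc (by exact_mod_cast le_top) y hC hD
  have heq : (fun y : Plane ↦ η (x, y)) = η ∘ aff := by
    funext z; simp [affeq]
  rw [heq]
  refine hcomp.trans ?_
  rw [one_pow, mul_one]
  exact mul_le_mul_of_nonneg_right (by exact_mod_cast Nat.cast_le.2 (Nat.factorial_le hm)) hA0

/-- Core nonstationary phase estimate, integrating by parts in the `y` variable. -/
lemma core (η : Plane × Plane → ℂ) (hη : ContDiff ℝ (⊤ : ℕ∞) η) (hηc : HasCompactSupport η)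
    (hηsupp : tsupport η ⊆
      {p : Plane × Plane | 1 / 2 ≤ ‖p.1‖ ∧ ‖p.1‖ ≤ 1 ∧ 1 / 2 ≤ ‖p.2‖ ∧ ‖p.2‖ ≤ 1})
    (N : ℕ) :
    ∃ C : ℝ, 0 < C ∧ ∀ (ζ ξ : Plane) (τ t R : ℝ), 0 < R →
      (∀ x : Plane, 1 / 2 ≤ ‖x‖ → ‖x‖ ≤ 1 → R ≤ ‖ξ + τ • perp x‖) →
      ‖oscInt η ζ ξ τ t‖ ≤ C / R ^ N := by
  have hbd : ∀ i : ℕ, ∃ Ci : ℝ, ∀ p, ‖iteratedFDeriv ℝ i η p‖ ≤ Ci := by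
    intro i
    obtain ⟨Ci, hCi⟩ := ((hη.continuous_iteratedFDeriv (by exact_mod_cast le_top))).bounded_above_of_compact_support
      (hηc.iteratedFDeriv i)
    exact ⟨Ci, hCi⟩
  choose Abd hAbd using hbd
  set A : ℝ := ∑ i ∈ Finset.range (N + 1), |Abd i| with hAdef
  have hA : ∀ i : ℕ, i ≤ N → ∀ p, ‖iteratedFDeriv ℝ i η p‖ ≤ A := by
    intro i hi p
    calc ‖iteratedFDeriv ℝ i η p‖ ≤ Abd i := hAbd i p
      _ ≤ |Abd i| := le_abs_self _
      _ ≤ A := Finset.single_le_sum (fun j _ ↦ abs_nonneg (Abd j))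
          (Finset.mem_range.2 (by omega))
  have hA0 : 0 ≤ A := Finset.sum_nonneg fun _ _ ↦ abs_nonneg _
  set vol : ℝ := (volume (Metric.closedBall (0 : Plane) 1)).toReal with hvoldef
  have hvol0 : 0 ≤ vol := ENNReal.toReal_nonneg
  have hvolfin : volume (Metric.closedBall (0 : Plane) 1) < ⊤ :=
    (isCompact_closedBall _ _).measure_lt_top
  set S : ℝ := (N.factorial : ℝ) * A with hSdef
  have hS0 : 0 ≤ S := by positivity
  set B : ℝ := 2 ^ N * (((N : ℝ) + 1) * (vol * S)) with hBdef
  have hB0 : 0 ≤ B := by positivity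
  refine ⟨vol * B + 1, by positivity, ?_⟩
  intro ζ ξ τ t R hR hfreq
  set G : Plane × Plane → ℂ := fun p ↦
    Complex.exp (((2 * π * (-(inner ℝ ζ p.1 : ℝ) + (inner ℝ ξ p.2 : ℝ) +
      τ * (sarea p.1 p.2 - t)) : ℝ) : ℂ) * Complex.I) * η p with hGdef
  have hGcont : Continuous G := by
    apply Continuous.mul _ hη.continuous
    exact Complex.continuous_exp.comp
      ((Complex.continuous_ofReal.comp (phase_cont ζ ξ τ t)).mul continuous_const)
  have hGc : HasCompactSupport G := hηc.mul_left
  have hGi : Integrable G := hGcont.integrable_of_hasCompactSupport hGc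
  have hGiprod : Integrable G (volume.prod volume) := by
    rwa [← Measure.volume_eq_prod]
  set g : Plane → ℂ := fun x ↦ ∫ y, G (x, y) with hgdef
  have hgi : Integrable g := hGiprod.integral_prod_left
  have hpt : ∀ x y : Plane,
      Complex.exp (Complex.I * (2 * Real.pi *
        (-(inner ℝ ζ x : ℝ) + (inner ℝ ξ y : ℝ) + τ * (sarea x y - t)))) * η (x, y)
      = G (x, y) := by
    intro x y
    simp only [hGdef]
    refine congrArg (· * η (x, y)) (congrArg Complex.exp ?_)
    push_cast
    ring
  have hosc : oscInt η ζ ξ τ t = ∫ x, g x := by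
    unfold oscInt
    exact congrArg (fun h : Plane → ℂ ↦ ∫ x, h x)
      (funext fun x ↦ congrArg (fun h : Plane → ℂ ↦ ∫ y, h y)
        (funext fun y ↦ hpt x y))
  have hkey : ∀ x : Plane, g x =
      Complex.exp (((2 * π * (-(inner ℝ ζ x : ℝ) - τ * t) : ℝ) : ℂ) * Complex.I) *
        𝓕 (fun y ↦ η (x, y)) (-(ξ + τ • perp x)) := by
    intro x
    rw [Real.fourier_eq', ← integral_const_mul]
    refine congrArg (fun h : Plane → ℂ ↦ ∫ y, h y) (funext fun y ↦ ?_)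
    have h1 : (inner ℝ y (perp x) : ℝ) = sarea x y := by
      rw [real_inner_comm]; exact inner_perp x y
    have hip : (inner ℝ y (-(ξ + τ • perp x)) : ℝ) = -(inner ℝ ξ y : ℝ) - τ * sarea x y := by
      rw [inner_neg_right, inner_add_right, real_inner_smul_right, h1,
        real_inner_comm y ξ]
      ring
    rw [smul_eq_mul, ← mul_assoc, ← Complex.exp_add]
    simp only [hGdef, hip]
    refine congrArg (· * η (x, y)) (congrArg Complex.exp ?_)
    push_cast
    ring
  have hnorm : ∀ x : Plane, ‖g x‖ ≤
      Set.indicator (Metric.closedBall (0 : Plane) 1) (fun _ ↦ B / R ^ N) x := by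
    intro x
    by_cases hx1 : ‖x‖ ≤ 1
    · rw [Set.indicator_of_mem (mem_closedBall_zero_iff.2 hx1)]
      by_cases hx2 : 1 / 2 ≤ ‖x‖
      · rw [hkey x, norm_mul, Complex.norm_exp_ofReal_mul_I, one_mul]
        have hfxc : ContDiff ℝ (⊤ : ℕ∞) (fun y : Plane ↦ η (x, y)) :=
          hη.comp (contDiff_const.prodMk contDiff_id)
        have hzero : ∀ y : Plane, ¬ ‖y‖ ≤ 1 → η (x, y) = 0 := by
          intro y hy
          apply image_eq_zero_of_notMem_tsupport
          intro hmem
          exact hy (hηsupp hmem).2.2.2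
        have hfxcs : HasCompactSupport (fun y : Plane ↦ η (x, y)) :=
          HasCompactSupport.intro (isCompact_closedBall (0 : Plane) 1)
            (fun y hy ↦ hzero y (by simpa [mem_closedBall_zero_iff] using hy))
        have hfxsupp : tsupport (fun y : Plane ↦ η (x, y)) ⊆ Metric.closedBall 0 1 := by
          apply closure_minimal _ Metric.isClosed_closedBall
          intro y hy
          rw [Function.mem_support] at hy
          rw [mem_closedBall_zero_iff]
          by_contra h
          exact hy (hzero y h)
        have hfxS : ∀ m : ℕ, m ≤ N → ∀ v,
            ‖iteratedFDeriv ℝ m (fun y : Plane ↦ η (x, y)) v‖ ≤ S :=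
          fun m hm v ↦ slice_bound η hη N hA x hm v
        have hw : R ≤ ‖-(ξ + τ • perp x)‖ := by
          rw [norm_neg]; exact hfreq x hx2 hx1
        exact fourier_decay _ hfxc hfxcs hfxsupp N hfxS hR hw
      · have hg0 : g x = 0 := by
          have hz : ∀ y : Plane, G (x, y) = 0 := by
            intro y
            have hη0 : η (x, y) = 0 := by
              apply image_eq_zero_of_notMem_tsupport
              intro hmem
              exact hx2 (hηsupp hmem).1
            simp [hGdef, hη0]
          simp [hgdef, hz]
        rw [hg0, norm_zero]
        positivity
    · rw [Set.indicator_of_notMem (by simpa [mem_closedBall_zero_iff] using hx1)]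
      have hg0 : g x = 0 := by
        have hz : ∀ y : Plane, G (x, y) = 0 := by
          intro y
          have hη0 : η (x, y) = 0 := by
            apply image_eq_zero_of_notMem_tsupport
            intro hmem
            exact hx1 (hηsupp hmem).2.1
          simp [hGdef, hη0]
        simp [hgdef, hz]
      rw [hg0, norm_zero]
  calc ‖oscInt η ζ ξ τ t‖ = ‖∫ x, g x‖ := by rw [hosc]
    _ ≤ ∫ x, ‖g x‖ := norm_integral_le_integral_norm _
    _ ≤ ∫ x, Set.indicator (Metric.closedBall (0 : Plane) 1) (fun _ ↦ B / R ^ N) x :=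
        integral_mono hgi.norm
          ((integrable_indicator_iff measurableSet_closedBall).2
            (integrableOn_const hvolfin.ne)) hnorm
    _ = vol * (B / R ^ N) := by
        rw [integral_indicator_const _ measurableSet_closedBall, smul_eq_mul]
        rfl
    _ ≤ (vol * B + 1) / R ^ N := by
        rw [mul_div_assoc']
        gcongr
        linarith

/-- Swapping the two `Plane` variables in the oscillatory integral. -/
lemma osc_swap (η : Plane × Plane → ℂ) (hη : Continuous η) (hηc : HasCompactSupport η)
    (ζ ξ : Plane) (τ t : ℝ) :
    oscInt η ζ ξ τ t = oscInt (fun p ↦ η (p.2, p.1)) (-ξ) (-ζ) (-τ) (-t) := by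
  have hswapc : Continuous fun p : Plane × Plane ↦ η (p.2, p.1) :=
    hη.comp (continuous_snd.prodMk continuous_fst)
  have hswapcs : HasCompactSupport fun p : Plane × Plane ↦ η (p.2, p.1) :=
    hηc.comp_homeomorph (Homeomorph.prodComm Plane Plane)
  have hcont' : Continuous (fun p : Plane × Plane ↦
      Complex.exp (((2 * π * (-(inner ℝ (-ξ) p.1 : ℝ) + (inner ℝ (-ζ) p.2 : ℝ) +
        (-τ) * (sarea p.1 p.2 - (-t))) : ℝ) : ℂ) * Complex.I) * η (p.2, p.1)) := by
    apply Continuous.mul _ hswapc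
    exact Complex.continuous_exp.comp
      ((Complex.continuous_ofReal.comp (phase_cont (-ξ) (-ζ) (-τ) (-t))).mul continuous_const)
  have heq : (Function.uncurry fun x y : Plane ↦
      Complex.exp (Complex.I * (2 * Real.pi *
        (-(inner ℝ (-ξ) x : ℝ) + (inner ℝ (-ζ) y : ℝ) + (-τ) * (sarea x y - (-t))))) *
        η (y, x)) = (fun p : Plane × Plane ↦
      Complex.exp (((2 * π * (-(inner ℝ (-ξ) p.1 : ℝ) + (inner ℝ (-ζ) p.2 : ℝ) +
        (-τ) * (sarea p.1 p.2 - (-t))) : ℝ) : ℂ) * Complex.I) * η (p.2, p.1)) := by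
    funext p
    refine congrArg (· * η (p.2, p.1)) (congrArg Complex.exp ?_)
    push_cast
    ring
  have h : Integrable (Function.uncurry fun x y : Plane ↦
      Complex.exp (Complex.I * (2 * Real.pi *
        (-(inner ℝ (-ξ) x : ℝ) + (inner ℝ (-ζ) y : ℝ) + (-τ) * (sarea x y - (-t))))) *
        η (y, x)) (volume.prod volume) := by
    rw [heq, ← Measure.volume_eq_prod]
    apply hcont'.integrable_of_hasCompactSupport
    exact hswapcs.mul_left
  have hswap := MeasureTheory.integral_integral_swap (f := fun x y : Plane ↦
      Complex.exp (Complex.I * (2 * Real.pi *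
        (-(inner ℝ (-ξ) x : ℝ) + (inner ℝ (-ζ) y : ℝ) + (-τ) * (sarea x y - (-t))))) *
        η (y, x)) h
  beta_reduce at hswap
  calc oscInt η ζ ξ τ t
      = ∫ a : Plane, ∫ b : Plane,
          Complex.exp (Complex.I * (2 * Real.pi *
            (-(inner ℝ (-ξ) b : ℝ) + (inner ℝ (-ζ) a : ℝ) + (-τ) * (sarea b a - (-t))))) *
          η (a, b) := by
        unfold oscInt
        refine congrArg (fun h : Plane → ℂ ↦ ∫ x, h x) (funext fun a ↦
          congrArg (fun h : Plane → ℂ ↦ ∫ y, h y) (funext fun b ↦ ?_))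
        refine congrArg (· * η (a, b)) (congrArg Complex.exp ?_)
        rw [inner_neg_left, inner_neg_left, sarea_swap b a]
        push_cast
        ring
    _ = ∫ x : Plane, ∫ y : Plane,
          Complex.exp (Complex.I * (2 * Real.pi *
            (-(inner ℝ (-ξ) x : ℝ) + (inner ℝ (-ζ) y : ℝ) + (-τ) * (sarea x y - (-t))))) *
          η (y, x) := hswap.symm
    _ = oscInt (fun p ↦ η (p.2, p.1)) (-ξ) (-ζ) (-τ) (-t) := by
        unfold oscInt
        refine congrArg (fun h : Plane → ℂ ↦ ∫ x, h x) (funext fun a ↦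
          congrArg (fun h : Plane → ℂ ↦ ∫ y, h y) (funext fun b ↦ ?_))
        refine congrArg (fun z : ℂ ↦ Complex.exp z * η (b, a)) ?_
        push_cast
        ring

/-- Nonstationary-phase bound: if `η` is smooth and compactly supported in
`{1/2 ≤ ‖x‖ ≤ 1, 1/2 ≤ ‖y‖ ≤ 1}`, then for every `N` there is `C_N` (depending only on
`N` and `η`) such that `|I(ζ,ξ,τ)| ≤ C_N 2^{−N max(j,l)}` whenever `|j − l| > 5`,
`2^{j−2} ≤ ‖ζ‖ ≤ 2^{j+2}` and `2^{l−2} ≤ ‖ξ‖ ≤ 2^{l+2}`, uniformly in `τ, t ∈ ℝ`. -/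
theorem statement15 (η : Plane × Plane → ℂ) (hη : ContDiff ℝ (⊤ : ℕ∞) η)
    (hηc : HasCompactSupport η)
    (hηsupp : tsupport η ⊆
      {p : Plane × Plane | 1 / 2 ≤ ‖p.1‖ ∧ ‖p.1‖ ≤ 1 ∧ 1 / 2 ≤ ‖p.2‖ ∧ ‖p.2‖ ≤ 1}) :
    ∀ N : ℕ, ∃ CN : ℝ, 0 < CN ∧
      ∀ j l : ℕ, 5 < |(j : ℤ) - (l : ℤ)| →
        ∀ ζ ξ : Plane,
          (2 : ℝ) ^ ((j : ℝ) - 2) ≤ ‖ζ‖ → ‖ζ‖ ≤ (2 : ℝ) ^ ((j : ℝ) + 2) →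
          (2 : ℝ) ^ ((l : ℝ) - 2) ≤ ‖ξ‖ → ‖ξ‖ ≤ (2 : ℝ) ^ ((l : ℝ) + 2) →
          ∀ τ t : ℝ,
            ‖oscInt η ζ ξ τ t‖ ≤ CN * (2 : ℝ) ^ (-(N : ℝ) * (max j l : ℕ)) := by
  intro N
  obtain ⟨C₁, hC₁, H₁⟩ := core η hη hηc hηsupp N
  set η' : Plane × Plane → ℂ := fun p ↦ η (p.2, p.1) with hη'def
  have hη'c : ContDiff ℝ (⊤ : ℕ∞) η' := hη.comp (contDiff_snd.prodMk contDiff_fst)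
  have hη'cs : HasCompactSupport η' :=
    hηc.comp_homeomorph (Homeomorph.prodComm Plane Plane)
  have hη'supp : tsupport η' ⊆
      {p : Plane × Plane | 1 / 2 ≤ ‖p.1‖ ∧ ‖p.1‖ ≤ 1 ∧ 1 / 2 ≤ ‖p.2‖ ∧ ‖p.2‖ ≤ 1} := by
    have hsub : tsupport η' ⊆ Prod.swap ⁻¹' tsupport η := by
      apply closure_minimal _ ((isClosed_tsupport η).preimage continuous_swap)
      intro p hp
      exact subset_closure hp
    intro p hp
    have h := hηsupp (hsub hp)
    exact ⟨h.2.2.1, h.2.2.2, h.1, h.2.1⟩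
  obtain ⟨C₂, hC₂, H₂⟩ := core η' hη'c hη'cs hη'supp N
  refine ⟨max C₁ C₂ * (2 : ℝ) ^ (5 * (N : ℝ)) + 1, by positivity, ?_⟩
  intro j l hjl ζ ξ hζ₁ hζ₂ hξ₁ hξ₂ τ t
  set M : ℕ := max j l with hM
  set R : ℝ := (2 : ℝ) ^ ((M : ℝ) - 5) with hRdef
  have hR : 0 < R := Real.rpow_pos_of_pos two_pos _
  -- conversion of the bound `C / R ^ N` to the required form
  have hfinal : ∀ (z : ℝ) (C : ℝ), 0 < C → C ≤ max C₁ C₂ →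
      z ≤ C / R ^ N →
      z ≤ (max C₁ C₂ * (2 : ℝ) ^ (5 * (N : ℝ)) + 1) * (2 : ℝ) ^ (-(N : ℝ) * (M : ℝ)) := by
    intro z C hC0 hCle h
    have hRN : R ^ N = (2 : ℝ) ^ (((M : ℝ) - 5) * N) := by
      rw [hRdef, ← Real.rpow_natCast ((2 : ℝ) ^ ((M : ℝ) - 5)) N,
        ← Real.rpow_mul (by norm_num)]
    have e1 : (2 : ℝ) ^ (5 * (N : ℝ)) * (2 : ℝ) ^ (-(N : ℝ) * (M : ℝ)) =
        (2 : ℝ) ^ (-(((M : ℝ) - 5) * N)) := by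
      rw [← Real.rpow_add two_pos]
      congr 1
      ring
    have hp1 : (0 : ℝ) < (2 : ℝ) ^ (5 * (N : ℝ)) := Real.rpow_pos_of_pos two_pos _
    have hp2 : (0 : ℝ) < (2 : ℝ) ^ (-(N : ℝ) * (M : ℝ)) := Real.rpow_pos_of_pos two_pos _
    calc z ≤ C / R ^ N := h
      _ = C * (2 : ℝ) ^ (-(((M : ℝ) - 5) * N)) := by
          rw [hRN, div_eq_mul_inv, ← Real.rpow_neg (by norm_num)]
      _ = C * ((2 : ℝ) ^ (5 * (N : ℝ)) * (2 : ℝ) ^ (-(N : ℝ) * (M : ℝ))) := by rw [e1]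
      _ ≤ (max C₁ C₂ * (2 : ℝ) ^ (5 * (N : ℝ)) + 1) * (2 : ℝ) ^ (-(N : ℝ) * (M : ℝ)) := by
          rw [← mul_assoc]
          apply mul_le_mul_of_nonneg_right _ hp2.le
          nlinarith
  -- elementary norm inequalities
  have hlow1 : ∀ (a b : Plane), ‖a‖ - ‖b‖ ≤ ‖a + b‖ := by
    intro a b
    have h := norm_sub_norm_le a (-b)
    simpa [sub_neg_eq_add] using h
  have hlow2 : ∀ (a b : Plane), ‖b‖ - ‖a‖ ≤ ‖a + b‖ := by
    intro a b
    have h := hlow1 b a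
    simpa [add_comm] using h
  have hsm : ∀ (c : ℝ) (x : Plane), ‖c • perp x‖ = |c| * ‖x‖ := by
    intro c x
    rw [norm_smul, Real.norm_eq_abs, norm_perp]
  have hcase : l + 6 ≤ j ∨ j + 6 ≤ l := by
    rcases le_or_gt ((j : ℤ) - l) 0 with h | h
    · right
      have habs : |(j : ℤ) - l| = -((j : ℤ) - l) := abs_of_nonpos h
      omega
    · left
      have habs : |(j : ℤ) - l| = (j : ℤ) - l := abs_of_pos h
      omega
  rcases hcase with hc | hc
  · -- j is large: M = j
    have hMj : M = j := max_eq_left (by omega)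
    set u : ℝ := (2 : ℝ) ^ ((j : ℝ) - 5) with hu
    have hu0 : 0 < u := Real.rpow_pos_of_pos two_pos _
    have hRu : R = u := by rw [hRdef, hMj]
    have h2u : (2 : ℝ) ^ ((j : ℝ) - 4) = 2 * u := by
      rw [hu, show (j : ℝ) - 4 = ((j : ℝ) - 5) + 1 by ring, Real.rpow_add two_pos,
        Real.rpow_one]
      ring
    have h8u : (2 : ℝ) ^ ((j : ℝ) - 2) = 8 * u := by
      rw [hu, show (j : ℝ) - 2 = ((j : ℝ) - 5) + 3 by ring, Real.rpow_add two_pos,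
        show ((3 : ℝ)) = ((3 : ℕ) : ℝ) by norm_num, Real.rpow_natCast]
      norm_num
      ring
    have hξ2u : ‖ξ‖ ≤ 2 * u := by
      rw [← h2u]
      refine hξ₂.trans (Real.rpow_le_rpow_of_exponent_le one_le_two ?_)
      have : (l : ℝ) + 6 ≤ (j : ℝ) := by exact_mod_cast Nat.cast_le.2 hc
      linarith
    have hζ8u : 8 * u ≤ ‖ζ‖ := by rw [← h8u]; exact hζ₁
    rcases le_or_gt (|τ|) (6 * u) with hτ | hτ
    · -- small τ: integrate by parts in x, via the swapped integral
      rw [osc_swap η hη.continuous hηc ζ ξ τ t]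
      apply hfinal _ C₂ hC₂ (le_max_right _ _)
      apply H₂ (-ξ) (-ζ) (-τ) (-t) R hR
      intro x hx1 hx2
      have hng : (-ζ) + (-τ) • perp x = -(ζ + τ • perp x) := by
        rw [neg_smul, neg_add]
      rw [hng, norm_neg]
      have h1 : ‖τ • perp x‖ ≤ 6 * u := by
        rw [hsm]
        calc |τ| * ‖x‖ ≤ |τ| * 1 := by gcongr
          _ = |τ| := mul_one _
          _ ≤ 6 * u := hτ
      have h2 := hlow1 ζ (τ • perp x)
      rw [hRu]
      linarith
    · -- large τ: integrate by parts in y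
      apply hfinal _ C₁ hC₁ (le_max_left _ _)
      apply H₁ ζ ξ τ t R hR
      intro x hx1 hx2
      have h1 : 3 * u ≤ ‖τ • perp x‖ := by
        rw [hsm]
        nlinarith [abs_nonneg τ]
      have h2 := hlow2 ξ (τ • perp x)
      rw [hRu]
      linarith
  · -- l is large: M = l
    have hMl : M = l := max_eq_right (by omega)
    set v : ℝ := (2 : ℝ) ^ ((l : ℝ) - 5) with hv
    have hv0 : 0 < v := Real.rpow_pos_of_pos two_pos _
    have hRv : R = v := by rw [hRdef, hMl]
    have h2v : (2 : ℝ) ^ ((l : ℝ) - 4) = 2 * v := by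
      rw [hv, show (l : ℝ) - 4 = ((l : ℝ) - 5) + 1 by ring, Real.rpow_add two_pos,
        Real.rpow_one]
      ring
    have h8v : (2 : ℝ) ^ ((l : ℝ) - 2) = 8 * v := by
      rw [hv, show (l : ℝ) - 2 = ((l : ℝ) - 5) + 3 by ring, Real.rpow_add two_pos,
        show ((3 : ℝ)) = ((3 : ℕ) : ℝ) by norm_num, Real.rpow_natCast]
      norm_num
      ring
    have hζ2v : ‖ζ‖ ≤ 2 * v := by
      rw [← h2v]
      refine hζ₂.trans (Real.rpow_le_rpow_of_exponent_le one_le_two ?_)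
      have : (j : ℝ) + 6 ≤ (l : ℝ) := by exact_mod_cast Nat.cast_le.2 hc
      linarith
    have hξ8v : 8 * v ≤ ‖ξ‖ := by rw [← h8v]; exact hξ₁
    rcases le_or_gt (|τ|) (6 * v) with hτ | hτ
    · -- small τ: integrate by parts in y
      apply hfinal _ C₁ hC₁ (le_max_left _ _)
      apply H₁ ζ ξ τ t R hR
      intro x hx1 hx2
      have h1 : ‖τ • perp x‖ ≤ 6 * v := by
        rw [hsm]
        calc |τ| * ‖x‖ ≤ |τ| * 1 := by gcongr
          _ = |τ| := mul_one _
          _ ≤ 6 * v := hτ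
      have h2 := hlow1 ξ (τ • perp x)
      rw [hRv]
      linarith
    · -- large τ: integrate by parts in x, via the swapped integral
      rw [osc_swap η hη.continuous hηc ζ ξ τ t]
      apply hfinal _ C₂ hC₂ (le_max_right _ _)
      apply H₂ (-ξ) (-ζ) (-τ) (-t) R hR
      intro x hx1 hx2
      have hng : (-ζ) + (-τ) • perp x = -(ζ + τ • perp x) := by
        rw [neg_smul, neg_add]
      rw [hng, norm_neg]
      have h1 : 3 * v ≤ ‖τ • perp x‖ := by
        rw [hsm]
        nlinarith [abs_nonneg τ]
      have h2 := hlow2 ζ (τ • perp x)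
      rw [hRv]
      linarith
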